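/- Fix a period n and cycle length a ≥ 2 with n + a − 1 ≤ T. Suppose y_{n,a} is a global minimizer of L_{n,a} and y_{n+1,a−1} is a global minimizer of L_{n+1,a−1}, and set ℓ_{n,a} = K + L_{n,a}(y_{n,a}), ℓ_{n,1} = K + L_{n,1}(y_{n,1}), ℓ_{n+1,a−1} = K + L_{n+1,a−1}(y_{n+1,a−1}). If L_{n,1}(y_{n,a}) > ℓ_{n,1}, then ℓ_{n,a} > ℓ_{n,1} + ℓ_{n+1,a−1}; that is, the single cycle of length a starting in period n is strictly more costly than splitting it into a cycle of length 1 at period n followed by a cycle of length a − 1 starting at period n + 1. -/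

import Mathlib

open MeasureTheory ProbabilityTheory

/-- Accumulated demand `ξ_{n,k} = ξ_n + ⋯ + ξ_{n+k-1}`. -/
noncomputable def acc {Ω : Type*} (ξ : ℕ → Ω → ℝ) (n k : ℕ) (ω : Ω) : ℝ :=
  ∑ i ∈ Finset.range k, ξ (n + i) ω

/-- Cumulative distribution function `φ_{n,k}(y) = P(ξ_{n,k} ≤ y)` of accumulated demand. -/
noncomputable def cdf {Ω : Type*} [MeasurableSpace Ω] (μ : Measure Ω) (ξ : ℕ → Ω → ℝ)
    (n k : ℕ) (y : ℝ) : ℝ :=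
  (μ {ω | acc ξ n k ω ≤ y}).toReal

/-- Multi-period cost function
`L_{n,a}(y) = Σ_{k=1}^{a} (h·E[(y − ξ_{n,k})⁺] + p·E[(ξ_{n,k} − y)⁺])`. -/
noncomputable def Lmp {Ω : Type*} [MeasurableSpace Ω] (μ : Measure Ω) (h p : ℝ)
    (ξ : ℕ → Ω → ℝ) (n a : ℕ) (y : ℝ) : ℝ :=
  ∑ k ∈ Finset.Icc 1 a,
    (h * ∫ ω, max (y - acc ξ n k ω) 0 ∂μ + p * ∫ ω, max (acc ξ n k ω - y) 0 ∂μ)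

open Finset

/-!
Splitting off the first period, the realised cost of an `a`-cycle from period `n` with
order-up-to level `y` is the one-period cost at `y` plus the realised cost of an `(a-1)`-cycle
from `n + 1` with level `y - ξ n`. Since `ξ n` is independent of the later demands, the expected
second part is an average over `x = ξ n` of `L_{n+1,a-1}(y - x)`, hence at least
`min L_{n+1,a-1}`. So `L_{n,a}(y_{n,a}) ≥ L_{n,1}(y_{n,a}) + min L_{n+1,a-1}`, and the hypothesis
`L_{n,1}(y_{n,a}) > ℓ_{n,1}` finishes the proof.
-/

section Independence

variable {Ω α β : Type*} [MeasurableSpace Ω] [MeasurableSpace α] [MeasurableSpace β]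
  {μ : Measure Ω}

theorem ProbabilityTheory.IndepFun.le_integral_comp_of_forall_le [IsProbabilityMeasure μ]
    {X : Ω → α} {Y : Ω → β} (hXY : IndepFun X Y μ) (hX : AEMeasurable X μ)
    (hY : AEMeasurable Y μ) {F : α → β → ℝ} (hF : Measurable (Function.uncurry F))
    (hFi : Integrable (fun ω => F (X ω) (Y ω)) μ) {c : ℝ}
    (hc : ∀ x, c ≤ ∫ ω, F x (Y ω) ∂μ) :
    c ≤ ∫ ω, F (X ω) (Y ω) ∂μ := by
  have hXY' : AEMeasurable (fun ω => (X ω, Y ω)) μ := hX.prodMk hY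
  have hlaw : μ.map (fun ω => (X ω, Y ω)) = (μ.map X).prod (μ.map Y) :=
    (indepFun_iff_map_prod_eq_prod_map_map hX hY).1 hXY
  have hFi' : Integrable (Function.uncurry F) ((μ.map X).prod (μ.map Y)) := by
    rw [← hlaw]
    exact (integrable_map_measure hF.aestronglyMeasurable hXY').2 hFi
  have := Measure.isProbabilityMeasure_map hX
  calc c = ∫ _, c ∂(μ.map X) := by simp
    _ ≤ ∫ x, ∫ y, F x y ∂(μ.map Y) ∂(μ.map X) := by
      refine integral_mono (integrable_const c) hFi'.integral_prod_left fun x => ?_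
      have hFx : Measurable (F x) := hF.comp measurable_prodMk_left
      rw [integral_map hY hFx.aestronglyMeasurable]
      exact hc x
    _ = ∫ q, Function.uncurry F q ∂((μ.map X).prod (μ.map Y)) := (integral_prod _ hFi').symm
    _ = ∫ ω, F (X ω) (Y ω) ∂μ := by
      rw [← hlaw, integral_map hXY' hF.aestronglyMeasurable]
      rfl

theorem ProbabilityTheory.iIndepFun.indepFun_finset_of_notMem {f : ℕ → Ω → α}
    (hf : iIndepFun f μ) (hmeas : ∀ i, Measurable (f i)) {S : Finset ℕ} {i : ℕ}
    (hi : i ∉ S) :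
    IndepFun (f i) (fun ω (j : S) => f j ω) μ :=
  (hf.indepFun_finset {i} S (disjoint_singleton_left.2 hi) hmeas).comp
    (measurable_pi_apply (⟨i, mem_singleton_self i⟩ : ({i} : Finset ℕ))) measurable_id

end Independence

section PathCost

variable {Ω : Type*} (ξ : ℕ → Ω → ℝ) (h p : ℝ)

theorem acc_succ (n k : ℕ) (ω : Ω) : acc ξ n (k + 1) ω = ξ n ω + acc ξ (n + 1) k ω := by
  rw [acc, acc, sum_range_succ', add_zero, add_comm]
  congr 1
  exact sum_congr rfl fun i _ => by rw [add_right_comm, add_assoc]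

theorem acc_congr {Ω' : Type*} {ξ' : ℕ → Ω' → ℝ} {n k : ℕ} {ω : Ω} {ω' : Ω'}
    (hξ : ∀ i ∈ Ico n (n + k), ξ i ω = ξ' i ω') : acc ξ n k ω = acc ξ' n k ω' :=
  sum_congr rfl fun _ hi =>
    hξ _ (mem_Ico.2 ⟨le_add_right le_rfl, by simpa using mem_range.1 hi⟩)

noncomputable def pathCost (n a : ℕ) (y : ℝ) (ω : Ω) : ℝ :=
  ∑ k ∈ Icc 1 a, (h * max (y - acc ξ n k ω) 0 + p * max (acc ξ n k ω - y) 0)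

theorem pathCost_succ (n m : ℕ) (y : ℝ) (ω : Ω) :
    pathCost ξ h p n (m + 1) y ω =
      pathCost ξ h p n 1 y ω + pathCost ξ h p (n + 1) m (y - ξ n ω) ω := by
  rw [pathCost, ← Ico_add_one_right_eq_Icc, sum_Ico_eq_sum_range, Nat.add_sub_cancel,
    sum_range_succ', pathCost, Icc_self, sum_singleton, add_comm, pathCost,
    ← Ico_add_one_right_eq_Icc, sum_Ico_eq_sum_range, Nat.add_sub_cancel]
  congr 1
  refine sum_congr rfl fun k _ => ?_
  rw [add_comm 1 (k + 1), acc_succ, add_comm 1 k]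
  ring_nf

theorem pathCost_congr {Ω' : Type*} {ξ' : ℕ → Ω' → ℝ} {n a : ℕ} {y : ℝ} {ω : Ω}
    {ω' : Ω'} (hξ : ∀ i ∈ Ico n (n + a), ξ i ω = ξ' i ω') :
    pathCost ξ h p n a y ω = pathCost ξ' h p n a y ω' := by
  refine sum_congr rfl fun k hk => ?_
  rw [acc_congr ξ fun i hi => hξ i ?_]
  simp only [mem_Ico, mem_Icc] at hi hk ⊢
  omega

variable [MeasurableSpace Ω]

theorem measurable_acc (hξ : ∀ i, Measurable (ξ i)) (n k : ℕ) : Measurable (acc ξ n k) :=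
  Finset.measurable_sum _ fun _ _ => hξ _

theorem measurable_pathCost (hξ : ∀ i, Measurable (ξ i)) (n a : ℕ) :
    Measurable (Function.uncurry (pathCost ξ h p n a)) := by
  unfold pathCost
  refine Finset.measurable_sum _ fun k _ => ?_
  have := measurable_acc ξ hξ n k
  fun_prop

variable {μ : Measure Ω}

theorem integrable_acc (hξ : ∀ i, Integrable (ξ i) μ) (n k : ℕ) :
    Integrable (acc ξ n k) μ :=
  integrable_finsetSum _ fun _ _ => hξ _

variable [IsFiniteMeasure μ] (hξ : ∀ i, Integrable (ξ i) μ) (n : ℕ) (y : ℝ)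
include hξ

theorem integrable_max_sub_acc (k : ℕ) : Integrable (fun ω => max (y - acc ξ n k ω) 0) μ :=
  ((integrable_const y).sub (integrable_acc ξ hξ n k)).pos_part

theorem integrable_max_acc_sub (k : ℕ) : Integrable (fun ω => max (acc ξ n k ω - y) 0) μ :=
  ((integrable_acc ξ hξ n k).sub (integrable_const y)).pos_part

theorem integrable_pathCost (a : ℕ) : Integrable (pathCost ξ h p n a y) μ :=
  integrable_finsetSum _ fun k _ =>
    ((integrable_max_sub_acc ξ hξ n y k).const_mul h).add
      ((integrable_max_acc_sub ξ hξ n y k).const_mul p)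

theorem Lmp_eq_integral_pathCost (a : ℕ) :
    Lmp μ h p ξ n a y = ∫ ω, pathCost ξ h p n a y ω ∂μ := by
  unfold pathCost
  have hmax_sub k := (integrable_max_sub_acc ξ hξ n y k).const_mul h
  have hmax_acc k := (integrable_max_acc_sub ξ hξ n y k).const_mul p
  rw [integral_finsetSum]
  · refine sum_congr rfl fun k _ => ?_
    rw [integral_add (hmax_sub k) (hmax_acc k), integral_const_mul, integral_const_mul]
  · exact fun k _ => (hmax_sub k).add (hmax_acc k)

end PathCost

theorem Lmp_one_add_le_Lmp_succ {Ω : Type*} [MeasurableSpace Ω] {μ : Measure Ω}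
    [IsProbabilityMeasure μ] {ξ : ℕ → Ω → ℝ} (hmeas : ∀ i, Measurable (ξ i))
    (hint : ∀ i, Integrable (ξ i) μ) (hind : iIndepFun ξ μ) (h p : ℝ) (n m : ℕ)
    (y z : ℝ) (hz : ∀ w, Lmp μ h p ξ (n + 1) m z ≤ Lmp μ h p ξ (n + 1) m w) :
    Lmp μ h p ξ n 1 y + Lmp μ h p ξ (n + 1) m z ≤ Lmp μ h p ξ n (m + 1) y := by
  set S := Ico (n + 1) (n + 1 + m)
  -- `ζ` reads the demands of periods in `S` off the random vector `fun ω (i : S) => ξ i ω`.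
  let ζ : ℕ → (S → ℝ) → ℝ := fun i v => if hi : i ∈ S then v ⟨i, hi⟩ else 0
  have hζ : ∀ i, Measurable (ζ i) := fun i => by
    by_cases hi : i ∈ S
    · simpa [ζ, hi] using measurable_pi_apply _
    · simp [ζ, hi]
  have htail : ∀ ω x,
      pathCost ζ h p (n + 1) m x (fun i : S => ξ i ω) = pathCost ξ h p (n + 1) m x ω :=
    fun ω x => pathCost_congr ζ h p fun i hi => dif_pos hi
  have htail_int : Integrable (fun ω => pathCost ξ h p (n + 1) m (y - ξ n ω) ω) μ :=
    ((integrable_pathCost ξ h p hint n y (m + 1)).sub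
      (integrable_pathCost ξ h p hint n y 1)).congr (ae_of_all _ fun ω => by
        rw [Pi.sub_apply, pathCost_succ ξ h p n m y ω]
        ring)
  have htail_ge :
      Lmp μ h p ξ (n + 1) m z ≤ ∫ ω, pathCost ξ h p (n + 1) m (y - ξ n ω) ω ∂μ := by
    have hindep : IndepFun (ξ n) (fun ω (i : S) => ξ i ω) μ :=
      hind.indepFun_finset_of_notMem hmeas (by simp [S])
    have hF : Measurable (Function.uncurry fun x v => pathCost ζ h p (n + 1) m (y - x) v) :=
      (measurable_pathCost ζ h p hζ (n + 1) m).comp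
        ((measurable_const.sub measurable_fst).prodMk measurable_snd)
    simp only [← htail]
    refine hindep.le_integral_comp_of_forall_le (hmeas n).aemeasurable
      (measurable_pi_lambda _ fun i : S => hmeas i).aemeasurable hF ?_ fun x => ?_
    · simpa only [htail] using htail_int
    · simp only [htail]
      rw [← Lmp_eq_integral_pathCost ξ h p hint]
      exact hz _
  calc Lmp μ h p ξ n 1 y + Lmp μ h p ξ (n + 1) m z
      ≤ ∫ ω, pathCost ξ h p n 1 y ω ∂μ +
          ∫ ω, pathCost ξ h p (n + 1) m (y - ξ n ω) ω ∂μ := by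
        rw [Lmp_eq_integral_pathCost ξ h p hint]
        exact (add_le_add_iff_left _).2 htail_ge
    _ = Lmp μ h p ξ n (m + 1) y := by
        rw [← integral_add (integrable_pathCost ξ h p hint n y 1) htail_int,
          Lmp_eq_integral_pathCost ξ h p hint]
        simp only [pathCost_succ ξ h p n m y]

theorem stmt6_general {Ω : Type*} [MeasurableSpace Ω] (μ : Measure Ω) [IsProbabilityMeasure μ]
    (ξ : ℕ → Ω → ℝ)
    (hmeas : ∀ i, Measurable (ξ i)) (hint : ∀ i, Integrable (ξ i) μ)
    (hind : iIndepFun ξ μ)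
    (h p K : ℝ)
    (n a : ℕ) (ha : 2 ≤ a)
    (yna yn1 yn1a : ℝ)
    (hyn1a : ∀ z, Lmp μ h p ξ (n + 1) (a - 1) yn1a ≤ Lmp μ h p ξ (n + 1) (a - 1) z)
    (hcond : K + Lmp μ h p ξ n 1 yn1 < Lmp μ h p ξ n 1 yna) :
    (K + Lmp μ h p ξ n 1 yn1) + (K + Lmp μ h p ξ (n + 1) (a - 1) yn1a) <
      K + Lmp μ h p ξ n a yna := by
  obtain ⟨m, rfl⟩ : ∃ m, a = m + 1 := ⟨a - 1, by omega⟩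
  rw [Nat.add_sub_cancel] at hyn1a ⊢
  linarith [Lmp_one_add_le_Lmp_succ hmeas hint hind h p n m yna yn1a hyn1a]

/-- Key step of Lemma 1: if `L_{n,1}(y_{n,a}) > ℓ_{n,1}`, then
`ℓ_{n,a} > ℓ_{n,1} + ℓ_{n+1,a−1}`. -/
theorem stmt6 {Ω : Type*} [MeasurableSpace Ω] (μ : Measure Ω) [IsProbabilityMeasure μ]
    (T : ℕ) (ξ : ℕ → Ω → ℝ)
    (hmeas : ∀ i, Measurable (ξ i)) (hint : ∀ i, Integrable (ξ i) μ)
    (hpos : ∀ i, ∀ᵐ ω ∂μ, 0 ≤ ξ i ω)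
    (hind : iIndepFun ξ μ)
    (h p K : ℝ) (hh : 0 < h) (hp : 0 < p) (hK : 0 ≤ K)
    (n a : ℕ) (hn : 1 ≤ n) (ha : 2 ≤ a) (hna : n + a - 1 ≤ T)
    (yna yn1 yn1a : ℝ)
    (hyna : ∀ z, Lmp μ h p ξ n a yna ≤ Lmp μ h p ξ n a z)
    (hyn1 : ∀ z, Lmp μ h p ξ n 1 yn1 ≤ Lmp μ h p ξ n 1 z)
    (hyn1a : ∀ z, Lmp μ h p ξ (n + 1) (a - 1) yn1a ≤ Lmp μ h p ξ (n + 1) (a - 1) z)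
    (hcond : K + Lmp μ h p ξ n 1 yn1 < Lmp μ h p ξ n 1 yna) :
    (K + Lmp μ h p ξ n 1 yn1) + (K + Lmp μ h p ξ (n + 1) (a - 1) yn1a) <
      K + Lmp μ h p ξ n a yna :=
  stmt6_general μ ξ hmeas hint hind h p K n a ha yna yn1 yn1a hyn1a hcond
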